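/- Transformation of potentials under simple Moutard transform (Proposition 1): with the notation of the simple Moutard transform, let ψ, ψ⁺ solve the direct and conjugate equations with purely imaginary potentials ω_{ψ,ψ⁺}, ω_{ψ,f₁⁺}, ω_{f₁,ψ⁺}, ω_{f₁,f₁⁺} (the last nonvanishing). Define ψ̃ = ψ - f₁·ω_{ψ,f₁⁺}/ω_{f₁,f₁⁺} and ψ̃⁺ = ψ⁺ - f₁⁺·ω_{f₁,ψ⁺}/ω_{f₁,f₁⁺}. Then the function ω̃ := (ω_{ψ,ψ⁺}·ω_{f₁,f₁⁺} - ω_{ψ,f₁⁺}·ω_{f₁,ψ⁺})/ω_{f₁,f₁⁺} satisfies ∂_z ω̃ = ψ̃ψ̃⁺ and ∂_z̄ ω̃ = -conj(ψ̃ψ̃⁺), i.e. ω̃ is a potential for the transformed pair (ψ̃, ψ̃⁺). -/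

import Mathlib

open Complex ComplexConjugate

/-- Wirtinger derivative ∂_z = (∂_x - i ∂_y)/2. -/
noncomputable def dz (f : ℂ → ℂ) (z : ℂ) : ℂ :=
  (fderiv ℝ f z 1 - Complex.I * fderiv ℝ f z Complex.I) / 2

/-- Wirtinger derivative ∂_z̄ = (∂_x + i ∂_y)/2. -/
noncomputable def dzbar (f : ℂ → ℂ) (z : ℂ) : ℂ :=
  (fderiv ℝ f z 1 + Complex.I * fderiv ℝ f z Complex.I) / 2

/-! The transformed potential `ω̃` is the Schur complement of `ω_{f₁,f₁⁺}` in the matrix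
`[[ω_{ψ,ψ⁺}, ω_{ψ,f₁⁺}], [ω_{f₁,ψ⁺}, ω_{f₁,f₁⁺}]]`. The quotient rule expresses each
Wirtinger derivative of a Schur complement through those of the four entries, and substituting
the defining equations of the potentials leaves a polynomial identity in `1 / ω_{f₁,f₁⁺}`.
For `∂_z̄` one also needs that the potentials are purely imaginary, so that `conj ω = -ω`
and the ratios `ω_{ψ,f₁⁺} / ω_{f₁,f₁⁺}`, `ω_{f₁,ψ⁺} / ω_{f₁,f₁⁺}` are real. -/

section SchurComplement

variable {𝕜 E 𝔸 : Type*} [NontriviallyNormedField 𝕜] [NormedAddCommGroup E]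
  [NormedSpace 𝕜 E] [NormedField 𝔸] [NormedAlgebra 𝕜 𝔸] {a b c e : E → 𝔸} {z : E}

theorem fderiv_schurComplement (ha : DifferentiableAt 𝕜 a z)
    (hb : DifferentiableAt 𝕜 b z) (hc : DifferentiableAt 𝕜 c z) (he : DifferentiableAt 𝕜 e z)
    (he₀ : e z ≠ 0) (v : E) :
    fderiv 𝕜 (fun w => (a w * e w - b w * c w) / e w) z v =
      fderiv 𝕜 a z v - (fderiv 𝕜 b z v * c z + b z * fderiv 𝕜 c z v) / e z
        + b z * c z * fderiv 𝕜 e z v / e z ^ 2 := by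
  have hinv : HasFDerivAt (fun w => (e w)⁻¹)
      ((-ContinuousLinearMap.mulLeftRight 𝕜 𝔸 (e z)⁻¹ (e z)⁻¹).comp (fderiv 𝕜 e z)) z :=
    (hasFDerivAt_inv' he₀).comp z he.hasFDerivAt
  have hnum := (ha.hasFDerivAt.fun_mul he.hasFDerivAt).fun_sub
    (hb.hasFDerivAt.fun_mul hc.hasFDerivAt)
  simp_rw [div_eq_mul_inv]
  rw [(hnum.fun_mul hinv).fderiv]
  simp only [add_apply, sub_apply, smul_apply, neg_apply, ContinuousLinearMap.comp_apply,
    ContinuousLinearMap.mulLeftRight_apply, smul_eq_mul]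
  field_simp
  ring

end SchurComplement

theorem conj_eq_neg_of_re_eq_zero {w : ℂ} (hw : w.re = 0) : conj w = -w :=
  Complex.ext (by simp [hw]) (by simp)

section Wirtinger

variable {a b c e : ℂ → ℂ} {z : ℂ}

theorem dz_schurComplement (ha : DifferentiableAt ℝ a z) (hb : DifferentiableAt ℝ b z)
    (hc : DifferentiableAt ℝ c z) (he : DifferentiableAt ℝ e z) (he₀ : e z ≠ 0) :
    dz (fun w => (a w * e w - b w * c w) / e w) z =
      dz a z - (dz b z * c z + b z * dz c z) / e z + b z * c z * dz e z / e z ^ 2 := by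
  simp only [dz, fderiv_schurComplement ha hb hc he he₀]
  field_simp
  ring

theorem dzbar_schurComplement (ha : DifferentiableAt ℝ a z) (hb : DifferentiableAt ℝ b z)
    (hc : DifferentiableAt ℝ c z) (he : DifferentiableAt ℝ e z) (he₀ : e z ≠ 0) :
    dzbar (fun w => (a w * e w - b w * c w) / e w) z =
      dzbar a z - (dzbar b z * c z + b z * dzbar c z) / e z + b z * c z * dzbar e z / e z ^ 2 := by
  simp only [dzbar, fderiv_schurComplement ha hb hc he he₀]
  field_simp
  ring

end Wirtinger

theorem moutard_transformed_potential_general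
    (D : Set ℂ) (hD : IsOpen D) (f₁ f₁p ψ ψp ωff ωψf ωfψ ωψψ : ℂ → ℂ)
    (hωffC : ContDiffOn ℝ 1 ωff D) (hωψfC : ContDiffOn ℝ 1 ωψf D)
    (hωfψC : ContDiffOn ℝ 1 ωfψ D) (hωψψC : ContDiffOn ℝ 1 ωψψ D)
    (hωff1 : ∀ z ∈ D, dz ωff z = f₁ z * f₁p z)
    (hωff2 : ∀ z ∈ D, dzbar ωff z = -conj (f₁ z * f₁p z))
    (hωffim : ∀ z ∈ D, (ωff z).re = 0)
    (hωψf1 : ∀ z ∈ D, dz ωψf z = ψ z * f₁p z)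
    (hωψf2 : ∀ z ∈ D, dzbar ωψf z = -conj (ψ z * f₁p z))
    (hωψfim : ∀ z ∈ D, (ωψf z).re = 0)
    (hωfψ1 : ∀ z ∈ D, dz ωfψ z = f₁ z * ψp z)
    (hωfψ2 : ∀ z ∈ D, dzbar ωfψ z = -conj (f₁ z * ψp z))
    (hωfψim : ∀ z ∈ D, (ωfψ z).re = 0)
    (hωψψ1 : ∀ z ∈ D, dz ωψψ z = ψ z * ψp z)
    (hωψψ2 : ∀ z ∈ D, dzbar ωψψ z = -conj (ψ z * ψp z))
    (hne : ∀ z ∈ D, ωff z ≠ 0) :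
    ∀ z ∈ D,
      dz (fun w => (ωψψ w * ωff w - ωψf w * ωfψ w) / ωff w) z =
        (ψ z - f₁ z * ωψf z / ωff z) * (ψp z - f₁p z * ωfψ z / ωff z) ∧
      dzbar (fun w => (ωψψ w * ωff w - ωψf w * ωfψ w) / ωff w) z =
        -conj ((ψ z - f₁ z * ωψf z / ωff z) *
          (ψp z - f₁p z * ωfψ z / ωff z)) := by
  intro z hz
  have hdiff {ω : ℂ → ℂ} (hω : ContDiffOn ℝ 1 ω D) : DifferentiableAt ℝ ω z :=
    (hω.contDiffAt (hD.mem_nhds hz)).differentiableAt one_ne_zero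
  have h₀ := hne z hz
  constructor
  · rw [dz_schurComplement (hdiff hωψψC) (hdiff hωψfC) (hdiff hωfψC) (hdiff hωffC) h₀,
      hωψψ1 z hz, hωψf1 z hz, hωfψ1 z hz, hωff1 z hz]
    field_simp
    ring
  · rw [dzbar_schurComplement (hdiff hωψψC) (hdiff hωψfC) (hdiff hωfψC) (hdiff hωffC) h₀,
      hωψψ2 z hz, hωψf2 z hz, hωfψ2 z hz, hωff2 z hz]
    simp only [map_mul, map_sub, map_div₀, conj_eq_neg_of_re_eq_zero (hωffim z hz),
      conj_eq_neg_of_re_eq_zero (hωψfim z hz), conj_eq_neg_of_re_eq_zero (hωfψim z hz)]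
    field_simp
    ring

/-- Proposition 1: transformation of potentials under the simple
Moutard transform. -/
theorem moutard_transformed_potential
    (D : Set ℂ) (hD : IsOpen D) (u f₁ f₁p ψ ψp ωff ωψf ωfψ ωψψ : ℂ → ℂ)
    (hu : ContDiffOn ℝ 1 u D) (hf₁ : ContDiffOn ℝ 1 f₁ D)
    (hf₁p : ContDiffOn ℝ 1 f₁p D) (hψC : ContDiffOn ℝ 1 ψ D)
    (hψpC : ContDiffOn ℝ 1 ψp D)
    (hωffC : ContDiffOn ℝ 1 ωff D) (hωψfC : ContDiffOn ℝ 1 ωψf D)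
    (hωfψC : ContDiffOn ℝ 1 ωfψ D) (hωψψC : ContDiffOn ℝ 1 ωψψ D)
    (hf : ∀ z ∈ D, dzbar f₁ z = u z * conj (f₁ z))
    (hfp : ∀ z ∈ D, dzbar f₁p z = -conj (u z) * conj (f₁p z))
    (hψ : ∀ z ∈ D, dzbar ψ z = u z * conj (ψ z))
    (hψp : ∀ z ∈ D, dzbar ψp z = -conj (u z) * conj (ψp z))
    (hωff1 : ∀ z ∈ D, dz ωff z = f₁ z * f₁p z)
    (hωff2 : ∀ z ∈ D, dzbar ωff z = -conj (f₁ z * f₁p z))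
    (hωffim : ∀ z ∈ D, (ωff z).re = 0)
    (hωψf1 : ∀ z ∈ D, dz ωψf z = ψ z * f₁p z)
    (hωψf2 : ∀ z ∈ D, dzbar ωψf z = -conj (ψ z * f₁p z))
    (hωψfim : ∀ z ∈ D, (ωψf z).re = 0)
    (hωfψ1 : ∀ z ∈ D, dz ωfψ z = f₁ z * ψp z)
    (hωfψ2 : ∀ z ∈ D, dzbar ωfψ z = -conj (f₁ z * ψp z))
    (hωfψim : ∀ z ∈ D, (ωfψ z).re = 0)
    (hωψψ1 : ∀ z ∈ D, dz ωψψ z = ψ z * ψp z)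
    (hωψψ2 : ∀ z ∈ D, dzbar ωψψ z = -conj (ψ z * ψp z))
    (hωψψim : ∀ z ∈ D, (ωψψ z).re = 0)
    (hne : ∀ z ∈ D, ωff z ≠ 0) :
    ∀ z ∈ D,
      dz (fun w => (ωψψ w * ωff w - ωψf w * ωfψ w) / ωff w) z =
        (ψ z - f₁ z * ωψf z / ωff z) * (ψp z - f₁p z * ωfψ z / ωff z) ∧
      dzbar (fun w => (ωψψ w * ωff w - ωψf w * ωfψ w) / ωff w) z =
        -conj ((ψ z - f₁ z * ωψf z / ωff z) *
          (ψp z - f₁p z * ωfψ z / ωff z)) :=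
  moutard_transformed_potential_general D hD f₁ f₁p ψ ψp ωff ωψf ωfψ ωψψ hωffC hωψfC hωfψC hωψψC
    hωff1 hωff2 hωffim hωψf1 hωψf2 hωψfim hωfψ1 hωfψ2 hωfψim hωψψ1 hωψψ2 hne
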